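/- arXiv:1904.08989 — 8 statements merged into one kernel-verified Lean document; each statement's English description precedes it below -/
import Mathlib

section
/- Let λ = (λ_1 ≥ λ_2 ≥ ... ≥ λ_α) be a partition and let Γ_λ be the disjoint union of simplices Δ_1, ..., Δ_α where Δ_i is a (λ_i − 1)-simplex. Let μ be the conjugate partition of λ. Then the h-vector of Γ_λ satisfies h_0 = 1 and, for all 1 ≤ k ≤ λ_1, (−1)^{k−1} h_k = Σ_{m=1}^{λ_1 − k + 1} C(λ_1 − m, k−1) · (μ_m − 1). -/
/-- The simplicial complex which is the disjoint union of the full power sets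
(simplices) on the vertex sets `V i`. -/
def complexOf {α : ℕ} (V : Fin α → Finset ℕ) : Finset (Finset ℕ) :=
  Finset.univ.biUnion fun i => (V i).powerset

/-- `fvec V i` is the number of faces of cardinality `i` (i.e. dimension `i - 1`);
in particular `fvec V 0 = 1` counts the empty face (`f₋₁` in the usual indexing). -/
def fvec {α : ℕ} (V : Fin α → Finset ℕ) (i : ℕ) : ℕ :=
  ((complexOf V).filter fun S => S.card = i).card

/-- The h-vector: `hvec D f k = ∑_{i=0}^{k} (-1)^(k-i) C(D-i, D-k) f i`, where
`D = d + 1` for a complex of dimension `d` and `f i` is the number of faces of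
cardinality `i`. -/
def hvec (D : ℕ) (f : ℕ → ℕ) (k : ℕ) : ℤ :=
  ∑ i ∈ Finset.range (k + 1), (-1 : ℤ) ^ (k - i) * ((D - i).choose (D - k)) * f i

/-! Write `D = λ₁`. For `k ≤ D` the h-vector is linear in the f-vector, and as integers the
f-vector of `Γ_λ` is `∑ⱼ C(λⱼ, ·)` plus `1 - α` times `C(0, ·)`, the f-vector of the void complex
`{∅}`. An alternating Vandermonde-type identity gives `(-1)^k C(D - l, k)` as the h-vector of
`C(l, ·)`, whence `(-1)^(k-1) h_k = (α - 1) C(D, k) - ∑ⱼ C(D - λⱼ, k)`. On the other side,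
exchanging the sums over `m` and `j` turns the right-hand side into truncated hockey-stick sums
`∑_{1 ≤ m ≤ λⱼ} C(D - m, k - 1) = C(D, k) - C(D - λⱼ, k)`. -/

open Finset

theorem alternating_sum_choose_mul_choose {l D : ℕ} (hl : l ≤ D) (k : ℕ) :
    ∑ i ∈ range (k + 1), (-1 : ℤ) ^ i * l.choose i * (D - i).choose (k - i) = (D - l).choose k := by
  induction l generalizing D k with
  | zero =>
    rw [sum_range_succ', sum_eq_zero fun i _ => by simp]
    simp
  | succ l ih =>
    cases k with
    | zero => simp
    | succ k =>
      have pascal :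
          ∑ i ∈ range (k + 2), (-1 : ℤ) ^ i * (l + 1).choose i * (D - i).choose (k + 1 - i)
            = ∑ i ∈ range (k + 2), (-1 : ℤ) ^ i * l.choose i * (D - i).choose (k + 1 - i)
              - ∑ i ∈ range (k + 1), (-1 : ℤ) ^ i * l.choose i * (D - 1 - i).choose (k - i) := by
        rw [sum_range_succ', sum_range_succ' (fun i => (-1 : ℤ) ^ i * l.choose i * _),
          eq_sub_iff_add_eq, add_right_comm, ← sum_add_distrib]
        congr 1
        · refine sum_congr rfl fun i _ => ?_
          rw [show D - (i + 1) = D - 1 - i by omega, Nat.add_sub_add_right, Nat.choose_succ_succ']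
          push_cast
          ring
        · simp
      rw [pascal, ih (by omega), ih (by omega), show D - l = D - (l + 1) + 1 by omega,
        Nat.choose_succ_succ', show D - 1 - l = D - (l + 1) by omega]
      push_cast
      ring

theorem sum_Icc_choose_sub_one {D k n : ℕ} (hk : 1 ≤ k) (hn : n ≤ D) :
    ∑ m ∈ Icc 1 n, ((D - m).choose (k - 1) : ℤ) = D.choose k - (D - n).choose k := by
  induction n with
  | zero => simp
  | succ n ih =>
    rw [sum_Icc_succ_top (by omega), ih (by omega), show D - n = D - (n + 1) + 1 by omega,
      ← Nat.sub_add_cancel hk, Nat.choose_succ_succ', Nat.sub_add_cancel hk]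
    push_cast
    ring

theorem sum_Icc_choose_sub_one_eq_choose {D k : ℕ} (hk : 1 ≤ k) (hkD : k ≤ D) :
    ∑ m ∈ Icc 1 (D - k + 1), ((D - m).choose (k - 1) : ℤ) = D.choose k := by
  rw [sum_Icc_choose_sub_one hk (by omega), show D - (D - k + 1) = k - 1 by omega,
    Nat.choose_eq_zero_of_lt (by omega : k - 1 < k), Nat.cast_zero, sub_zero]

theorem sum_Icc_ite_le_choose_sub_one {D k l : ℕ} (hk : 1 ≤ k) (hkD : k ≤ D) (hl : l ≤ D) :
    ∑ m ∈ Icc 1 (D - k + 1), (if m ≤ l then ((D - m).choose (k - 1) : ℤ) else 0)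
      = D.choose k - (D - l).choose k := by
  rw [← sum_filter]
  rcases le_or_gt l (D - k + 1) with h | h
  · rw [show {m ∈ Icc 1 (D - k + 1) | m ≤ l} = Icc 1 l by
        ext; simp only [mem_filter, mem_Icc]; omega, sum_Icc_choose_sub_one hk hl]
  · rw [filter_true_of_mem fun m hm => by simp only [mem_Icc] at hm; omega,
      sum_Icc_choose_sub_one_eq_choose hk hkD, Nat.choose_eq_zero_of_lt (by omega : D - l < k),
      Nat.cast_zero, sub_zero]

theorem neg_one_pow_sub_mul_choose {D i k : ℕ} (hi : i ≤ k) (hk : k ≤ D) :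
    (-1 : ℤ) ^ (k - i) * (D - i).choose (D - k)
      = (-1) ^ k * ((-1) ^ i * (D - i).choose (k - i)) := by
  obtain ⟨j, rfl⟩ := Nat.exists_eq_add_of_le hi
  rw [Nat.add_sub_cancel_left, show D - (i + j) = D - i - j by omega, Nat.choose_symm (by omega)]
  ring_nf
  simp

theorem hvec_eq_of_cast_eq_sum_choose {ι : Type*} (s : Finset ι) (c : ι → ℤ) (l : ι → ℕ)
    {D k : ℕ} (hl : ∀ j ∈ s, l j ≤ D) (hk : k ≤ D) {f : ℕ → ℕ}
    (hf : ∀ i, (f i : ℤ) = ∑ j ∈ s, c j * (l j).choose i) :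
    hvec D f k = (-1) ^ k * ∑ j ∈ s, c j * (D - l j).choose k := by
  simp only [hvec, hf, mul_sum]
  rw [sum_comm]
  refine sum_congr rfl fun j hj => ?_
  rw [← alternating_sum_choose_mul_choose (hl j hj), mul_sum, mul_sum]
  refine sum_congr rfl fun i hi => ?_
  rw [neg_one_pow_sub_mul_choose (by simpa [Nat.lt_succ_iff] using hi) hk]
  ring

theorem fvec_zero {α : ℕ} (hα : 0 < α) (V : Fin α → Finset ℕ) : fvec V 0 = 1 := by
  rw [fvec, card_eq_one]
  refine ⟨∅, ?_⟩
  ext S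
  simpa [complexOf] using fun h : S = ∅ => ⟨⟨0, hα⟩, h ▸ empty_subset _⟩

theorem fvec_eq_sum_choose {α : ℕ} {V : Fin α → Finset ℕ}
    (hdisj : ∀ i j : Fin α, i ≠ j → Disjoint (V i) (V j)) {i : ℕ} (hi : i ≠ 0) :
    fvec V i = ∑ j, (V j).card.choose i := by
  rw [fvec, complexOf, filter_biUnion, card_biUnion]
  · simp_rw [← powersetCard_eq_filter, card_powersetCard]
  · intro a _ b _ hab
    refine disjoint_left.mpr fun S hSa hSb => ?_
    simp only [mem_filter, mem_powerset] at hSa hSb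
    obtain ⟨x, hx⟩ := card_pos.mp (Nat.pos_of_ne_zero (hSa.2 ▸ hi))
    exact disjoint_left.mp (hdisj a b hab) (hSa.1 hx) (hSb.1 hx)

theorem sum_Icc_choose_sub_one_mul_card_filter_le_sub_one {ι : Type*} [Fintype ι] (l : ι → ℕ)
    {D k : ℕ} (hk : 1 ≤ k) (hkD : k ≤ D) (hl : ∀ j, l j ≤ D) :
    ∑ m ∈ Icc 1 (D - k + 1), ((D - m).choose (k - 1) : ℤ) * (#{j | m ≤ l j} - 1)
      = ∑ j, ((D.choose k : ℤ) - (D - l j).choose k) - D.choose k := by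
  simp only [card_filter, Nat.cast_sum, Nat.cast_ite, Nat.cast_one, Nat.cast_zero, mul_sub,
    mul_one, mul_sum, mul_ite, mul_zero]
  rw [sum_sub_distrib, sum_comm, sum_Icc_choose_sub_one_eq_choose hk hkD]
  simp_rw [sum_Icc_ite_le_choose_sub_one hk hkD (hl _)]

theorem stmt2_general {α : ℕ} (hα : 0 < α) (lam : Fin α → ℕ)
    (hanti : ∀ i j : Fin α, i ≤ j → lam j ≤ lam i)
    (V : Fin α → Finset ℕ)
    (hdisj : ∀ i j : Fin α, i ≠ j → Disjoint (V i) (V j))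
    (hcard : ∀ i, (V i).card = lam i) :
    hvec (lam ⟨0, hα⟩) (fvec V) 0 = 1 ∧
    ∀ k, 1 ≤ k → k ≤ lam ⟨0, hα⟩ →
      (-1 : ℤ) ^ (k - 1) * hvec (lam ⟨0, hα⟩) (fvec V) k
        = ∑ m ∈ Finset.Icc 1 (lam ⟨0, hα⟩ - k + 1),
            ((lam ⟨0, hα⟩ - m).choose (k - 1)) *
              (((Finset.univ.filter fun j : Fin α => m ≤ lam j).card : ℤ) - 1) := by
  set D := lam ⟨0, hα⟩
  have hle : ∀ j, lam j ≤ D := fun j => hanti _ j (Nat.zero_le _)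
  refine ⟨by simp [hvec, fvec_zero hα V], fun k hk hkD => ?_⟩
  have hf : ∀ i, (fvec V i : ℤ)
      = ∑ j : Option (Fin α), j.elim (1 - α : ℤ) (fun _ => 1) * (j.elim 0 lam).choose i := by
    rintro (_ | i)
    · simp [fvec_zero hα V]
    · simp [fvec_eq_sum_choose hdisj i.succ_ne_zero, hcard]
  have hl : ∀ j : Option (Fin α), j.elim 0 lam ≤ D := by rintro (_ | j) <;> simp [hle]
  have hsign : (-1 : ℤ) ^ (k - 1) * (-1) ^ k = -1 := by
    rw [← pow_add, show k - 1 + k = 2 * (k - 1) + 1 by omega, pow_succ, pow_mul]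
    simp
  rw [hvec_eq_of_cast_eq_sum_choose univ _ _ (fun j _ => hl j) hkD hf, ← mul_assoc, hsign,
    sum_Icc_choose_sub_one_mul_card_filter_le_sub_one lam hk hkD hle, Fintype.sum_option]
  simp only [Option.elim_none, Option.elim_some, tsub_zero, one_mul, sum_sub_distrib, sum_const,
    card_univ, Fintype.card_fin, nsmul_eq_mul]
  ring

theorem stmt2 {α : ℕ} (hα : 0 < α) (lam : Fin α → ℕ)
    (hanti : ∀ i j : Fin α, i ≤ j → lam j ≤ lam i) (hpos : ∀ i, 1 ≤ lam i)
    (V : Fin α → Finset ℕ)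
    (hdisj : ∀ i j : Fin α, i ≠ j → Disjoint (V i) (V j))
    (hcard : ∀ i, (V i).card = lam i) :
    hvec (lam ⟨0, hα⟩) (fvec V) 0 = 1 ∧
    ∀ k, 1 ≤ k → k ≤ lam ⟨0, hα⟩ →
      (-1 : ℤ) ^ (k - 1) * hvec (lam ⟨0, hα⟩) (fvec V) k
        = ∑ m ∈ Finset.Icc 1 (lam ⟨0, hα⟩ - k + 1),
            ((lam ⟨0, hα⟩ - m).choose (k - 1)) *
              (((Finset.univ.filter fun j : Fin α => m ≤ lam j).card : ℤ) - 1) :=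
  stmt2_general hα lam hanti V hdisj hcard
end

section
/- Let ℓ = ρ · 2^m with ρ ≥ 1 odd and m ≥ 0, and let n = 2ℓ. Fix t with 0 ≤ t ≤ 2^m − 1, and let V_t be the set of elements of Z/nZ congruent to 2t+1 modulo 2^{m+1}. Then V_t is an ℓ-zero-sumfree subset of Z/nZ: no multiset of ℓ elements of V_t sums to 0 modulo n. -/
/-- A finite subset `S` of `ZMod n` is `ℓ`-zero-sumfree if no multiset of `ℓ` elements
of `S` (with repetition, encoded by a multiplicity function `c`) sums to `0`. -/
def IsZeroSumfree (n ℓ : ℕ) (S : Finset (ZMod n)) : Prop :=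
  ∀ c : ZMod n → ℕ, (∑ x ∈ S, c x) = ℓ → (∑ x ∈ S, c x • x) ≠ 0

/-!
Reduce modulo `2^(m+1)`, which divides `n = 2ℓ`: every element of `V_t` becomes `2t+1`, so a sum
of `ℓ = ρ 2^m` of them becomes `ρ 2^m (2t+1)`. Its `2`-adic valuation is exactly `m`, as `ρ (2t+1)`
is odd, so it is not `0` modulo `2^(m+1)`, and neither was the original sum modulo `n`.
-/

theorem map_sum_nsmul_of_map_eq {ι M N F : Type*} [AddCommMonoid M] [AddCommMonoid N]
    [FunLike F M N] [AddMonoidHomClass F M N] (f : F) (s : Finset ι) (c : ι → ℕ) (v : ι → M)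
    {a : N} (h : ∀ i ∈ s, f (v i) = a) :
    f (∑ i ∈ s, c i • v i) = (∑ i ∈ s, c i) • a := by
  rw [map_sum, Finset.sum_smul]
  exact Finset.sum_congr rfl fun i hi => by rw [map_nsmul, h i hi]

theorem ZMod.castHom_natCast_add_mul_self {n d : ℕ} (hd : d ∣ n) (a : ℕ) (k : ZMod n) :
    ZMod.castHom hd (ZMod d) ((a : ZMod n) + d * k) = a := by
  rw [map_add, map_mul, map_natCast, map_natCast, ZMod.natCast_self, zero_mul, add_zero]

theorem Nat.not_two_pow_succ_dvd_two_pow_mul {u : ℕ} (hu : Odd u) (m : ℕ) :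
    ¬ 2 ^ (m + 1) ∣ 2 ^ m * u := by
  rw [pow_succ, Nat.mul_dvd_mul_iff_left (by positivity)]
  exact hu.not_two_dvd_nat

theorem stmt6_general (ρ m t : ℕ) (hρ : Odd ρ)
    (S : Finset (ZMod (2 * (ρ * 2 ^ m))))
    (hS : ∀ x ∈ S, ∃ k : ZMod (2 * (ρ * 2 ^ m)),
      x = ((2 * t + 1 : ℕ) : ZMod (2 * (ρ * 2 ^ m))) + 2 ^ (m + 1) * k) :
    IsZeroSumfree (2 * (ρ * 2 ^ m)) (ρ * 2 ^ m) S := by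
  intro c hc hsum
  have hdvd : 2 ^ (m + 1) ∣ 2 * (ρ * 2 ^ m) := ⟨ρ, by ring⟩
  have hreduce : ∀ x ∈ S, ZMod.castHom hdvd (ZMod (2 ^ (m + 1))) x = (2 * t + 1 : ℕ) := by
    intro x hx
    obtain ⟨k, rfl⟩ := hS x hx
    simpa using ZMod.castHom_natCast_add_mul_self hdvd (2 * t + 1) k
  have hzero : ((ρ * 2 ^ m * (2 * t + 1) : ℕ) : ZMod (2 ^ (m + 1))) = 0 := by
    have := map_sum_nsmul_of_map_eq _ S c (fun x => x) hreduce
    rw [hsum, map_zero, hc, nsmul_eq_mul] at this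
    exact_mod_cast this.symm
  rw [ZMod.natCast_eq_zero_iff, show ρ * 2 ^ m * (2 * t + 1) = 2 ^ m * (ρ * (2 * t + 1)) by
    ring] at hzero
  exact Nat.not_two_pow_succ_dvd_two_pow_mul (hρ.mul (odd_two_mul_add_one t)) m hzero

theorem stmt6 (ρ m t : ℕ) (hρ : Odd ρ) (ht : t ≤ 2 ^ m - 1)
    (S : Finset (ZMod (2 * (ρ * 2 ^ m))))
    (hS : ∀ x ∈ S, ∃ k : ZMod (2 * (ρ * 2 ^ m)),
      x = ((2 * t + 1 : ℕ) : ZMod (2 * (ρ * 2 ^ m))) + 2 ^ (m + 1) * k) :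
    IsZeroSumfree (2 * (ρ * 2 ^ m)) (ρ * 2 ^ m) S :=
  stmt6_general ρ m t hρ S hS
end

section
/- Let ℓ = ρ · 2^m with ρ ≥ 1 odd and m ≥ 1, and let n = 2ℓ. If x and y are odd elements of Z/nZ lying in different residue classes modulo 2^{m+1}, then the set {x, y} is not ℓ-zero-sumfree: there exists 0 ≤ r ≤ ℓ with r·x + (ℓ − r)·y ≡ 0 mod n. -/
/-!
Lift `x` and `y` to integers `X` and `Y`. Since `2 ^ (m + 1) ∤ X - Y`, we can write
`X - Y = 2 ^ b * u` with `u` odd and `b ≤ m`. For `r = ρ * 2 ^ (m - b)` we get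
`r * X + (ℓ - r) * Y = r * (X - Y) + ℓ * Y = ℓ * (u + Y)`, and `u + Y` is even because `Y` is odd,
so this is a multiple of `2 * ℓ`.
-/

theorem Int.exists_le_eq_two_pow_mul_odd_of_not_dvd {D : ℤ} {m : ℕ} (h : ¬ 2 ^ (m + 1) ∣ D) :
    ∃ b ≤ m, ∃ u : ℤ, Odd u ∧ D = 2 ^ b * u := by
  have hD : D ≠ 0 := by rintro rfl; exact h (dvd_zero _)
  obtain ⟨u, hDu, hu⟩ :=
    ((Int.finiteMultiplicity_iff (a := 2)).2 ⟨by norm_num, hD⟩).exists_eq_pow_mul_and_not_dvd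
  refine ⟨_, ?_, u, Int.not_even_iff_odd.1 (mt Even.two_dvd hu), hDu⟩
  by_contra! hm
  exact h (hDu ▸ (pow_dvd_pow 2 hm).mul_right u)

theorem Int.exists_two_mul_dvd_mul_add_mul (ρ m : ℕ) {X Y : ℤ} (hY : Odd Y)
    (hXY : ¬ 2 ^ (m + 1) ∣ X - Y) :
    ∃ r ≤ ρ * 2 ^ m, 2 * (ρ * 2 ^ m : ℤ) ∣ r * X + ((ρ * 2 ^ m - r : ℕ) : ℤ) * Y := by
  obtain ⟨b, hb, u, hu, hXYu⟩ := Int.exists_le_eq_two_pow_mul_odd_of_not_dvd hXY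
  have hr : ρ * 2 ^ (m - b) ≤ ρ * 2 ^ m := by gcongr <;> omega
  refine ⟨ρ * 2 ^ (m - b), hr, ?_⟩
  obtain ⟨c, hc⟩ := hu.add_odd hY
  have hpow : (2 : ℤ) ^ (m - b) * 2 ^ b = 2 ^ m := by rw [← pow_add, Nat.sub_add_cancel hb]
  refine ⟨c, ?_⟩
  push_cast [Nat.cast_sub hr]
  linear_combination (ρ * 2 ^ (m - b) : ℤ) * hXYu + (ρ * u : ℤ) * hpow + (ρ * 2 ^ m : ℤ) * hc

theorem ZMod.exists_eq_add_mul_of_dvd_cast_sub {n : ℕ} {x y : ZMod n} {a : ℤ}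
    (h : a ∣ (x.cast : ℤ) - y.cast) : ∃ k : ZMod n, x = y + a * k := by
  obtain ⟨c, hc⟩ := h
  refine ⟨c, ?_⟩
  rw [← ZMod.intCast_zmod_cast x, ← ZMod.intCast_zmod_cast y,
    show (x.cast : ℤ) = y.cast + a * c by linarith]
  push_cast
  ring

theorem stmt7_general (ρ m : ℕ)
    (x y : ZMod (2 * (ρ * 2 ^ m)))
    (hy : ¬ ∃ M, y = 2 * M)
    (hxy : ¬ ∃ k : ZMod (2 * (ρ * 2 ^ m)), x = y + 2 ^ (m + 1) * k) :
    ∃ r : ℕ, r ≤ ρ * 2 ^ m ∧ r • x + (ρ * 2 ^ m - r) • y = 0 := by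
  have hY : Odd (y.cast : ℤ) := by
    refine Int.not_even_iff_odd.1 fun ⟨c, hc⟩ ↦ hy ⟨c, ?_⟩
    rw [← ZMod.intCast_zmod_cast y, hc]
    push_cast
    ring
  have hXY : ¬ (2 : ℤ) ^ (m + 1) ∣ (x.cast : ℤ) - y.cast := fun h ↦
    hxy (by simpa using ZMod.exists_eq_add_mul_of_dvd_cast_sub h)
  obtain ⟨r, hr, hdvd⟩ := Int.exists_two_mul_dvd_mul_add_mul ρ m hY hXY
  refine ⟨r, hr, ?_⟩
  have h0 := (ZMod.intCast_zmod_eq_zero_iff_dvd _ (2 * (ρ * 2 ^ m))).2 (by exact_mod_cast hdvd)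
  push_cast at h0
  simpa only [nsmul_eq_mul] using h0

theorem stmt7 (ρ m : ℕ) (hρ : Odd ρ) (hρ1 : 1 ≤ ρ) (hm : 1 ≤ m)
    (x y : ZMod (2 * (ρ * 2 ^ m)))
    (hx : ¬ ∃ M, x = 2 * M) (hy : ¬ ∃ M, y = 2 * M)
    (hxy : ¬ ∃ k : ZMod (2 * (ρ * 2 ^ m)), x = y + 2 ^ (m + 1) * k) :
    ∃ r : ℕ, r ≤ ρ * 2 ^ m ∧ r • x + (ρ * 2 ^ m - r) • y = 0 :=
  stmt7_general ρ m x y hy hxy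
end

section
/- Let p be prime, e ≥ 1, and n = p^e. Fix 1 ≤ i ≤ p−1 and 1 ≤ j ≤ e, and let V_{i,j} be the set of x in Z/p^eZ with x ≡ i·p^{j−1} mod p^j. Then V_{i,j} is a (p^e − 1)-zero-sumfree subset of Z/p^eZ: no multiset of p^e − 1 elements of V_{i,j} sums to 0 modulo p^e. -/
lemma map_sum_nsmul_of_forall_map_eq {F M N : Type*} [AddCommMonoid M] [AddCommMonoid N]
    [FunLike F M N] [AddMonoidHomClass F M N] (f : F) {S : Finset M} {a : N}
    (h : ∀ x ∈ S, f x = a) (c : M → ℕ) :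
    f (∑ x ∈ S, c x • x) = (∑ x ∈ S, c x) • a := by
  rw [map_sum, Finset.sum_smul]
  exact Finset.sum_congr rfl fun x hx => by rw [map_nsmul, h x hx]

lemma IsZeroSumfree.of_forall_map_eq {F N : Type*} [AddCommMonoid N] {n ℓ : ℕ}
    {S : Finset (ZMod n)} [FunLike F (ZMod n) N] [AddMonoidHomClass F (ZMod n) N] (f : F) {a : N}
    (h : ∀ x ∈ S, f x = a) (ha : ℓ • a ≠ 0) : IsZeroSumfree n ℓ S := by
  intro c hc hsum
  apply ha
  rw [← hc, ← map_sum_nsmul_of_forall_map_eq f h, hsum, map_zero]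

lemma Nat.not_dvd_pow_sub_one {p e : ℕ} (hp : 1 < p) (he : e ≠ 0) : ¬ p ∣ p ^ e - 1 := by
  intro h
  have h1 : p ∣ p ^ e - 1 + 1 := by
    rw [Nat.sub_add_cancel (Nat.one_le_pow _ _ (by omega))]
    exact dvd_pow_self p he
  have := Nat.le_of_dvd one_pos ((Nat.dvd_add_right h).mp h1)
  omega

lemma Nat.not_pow_dvd_mul_pow_pred {p m j : ℕ} (hp : 0 < p) (hm : ¬ p ∣ m) (hj : j ≠ 0) :
    ¬ p ^ j ∣ m * p ^ (j - 1) := by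
  obtain ⟨k, rfl⟩ := Nat.exists_eq_succ_of_ne_zero hj
  rwa [pow_succ, Nat.succ_sub_one, mul_comm m, Nat.mul_dvd_mul_iff_left (by positivity)]

theorem stmt8 (p e i j : ℕ) (hp : p.Prime) (he : 1 ≤ e)
    (hi1 : 1 ≤ i) (hi2 : i ≤ p - 1) (hj1 : 1 ≤ j) (hj2 : j ≤ e)
    (S : Finset (ZMod (p ^ e)))
    (hS : ∀ x ∈ S, ∃ k : ZMod (p ^ e),
      x = ((i * p ^ (j - 1) : ℕ) : ZMod (p ^ e)) + ((p ^ j : ℕ) : ZMod (p ^ e)) * k) :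
    IsZeroSumfree (p ^ e) (p ^ e - 1) S := by
  let reduce : ZMod (p ^ e) →+* ZMod (p ^ j) := ZMod.castHom (pow_dvd_pow p hj2) _
  refine IsZeroSumfree.of_forall_map_eq reduce
    (a := ((i * p ^ (j - 1) : ℕ) : ZMod (p ^ j))) (fun x hx => ?_) ?_
  · obtain ⟨k, rfl⟩ := hS x hx
    rw [map_add, map_mul, map_natCast, map_natCast, ZMod.natCast_self, zero_mul, add_zero]
  · have hi : ¬ p ∣ i := Nat.not_dvd_of_pos_of_lt hi1 (by omega)
    have hℓi : ¬ p ∣ (p ^ e - 1) * i := fun h =>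
      (hp.dvd_mul.mp h).elim (Nat.not_dvd_pow_sub_one hp.one_lt (by omega)) hi
    rw [nsmul_eq_mul, ← Nat.cast_mul, Ne, ZMod.natCast_eq_zero_iff, ← mul_assoc]
    exact Nat.not_pow_dvd_mul_pow_pred hp.pos hℓi (by omega)
end

section
/- Let p be prime and e ≥ 1. Suppose x ≡ i·p^{j−1} mod p^j and y ≡ i'·p^{j'−1} mod p^{j'} with 1 ≤ i, i' ≤ p−1, 1 ≤ j, j' ≤ e, and (i, j) ≠ (i', j'). Then {x, y} is not (p^e − 1)-zero-sumfree in Z/p^eZ: there exists 0 ≤ r ≤ p^e − 1 with r·x + (p^e − 1 − r)·y ≡ 0 mod p^e. -/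
/-!
It suffices that `x - y ∣ y`, a relation symmetric in `x` and `y`; so let `j ≤ j'`. Then
`x = p^(j-1) (i + p k)` and `y = p^(j-1) p^(j'-j) (i' + p k')`, so
`x - y = p^(j-1) T` with `T ≡ i - i' p^(j'-j) (mod p)`. Because `(i, j) ≠ (i', j')`, `T` is prime
to `p`, hence a unit of `ZMod (p^e)` (`p` is nilpotent there), and so `y = c (x - y)` for some `c`.
Taking `r` to be the representative of `c` in `[0, p^e)` gives
`r x + (p^e - 1 - r) y = c (x - y) - y = 0`.
-/

theorem ZMod.isUnit_intCast_add_prime_mul {p e : ℕ} (hp : p.Prime) {m : ℤ} (hm : ¬ (p : ℤ) ∣ m)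
    (t : ZMod (p ^ e)) : IsUnit ((m : ZMod (p ^ e)) + p * t) := by
  have hnil : IsNilpotent ((p : ZMod (p ^ e)) * t) :=
    ⟨e, by rw [mul_pow, ← Nat.cast_pow, ZMod.natCast_self, zero_mul]⟩
  have hm_unit : IsUnit (m : ZMod (p ^ e)) := by
    rw [ZMod.coe_int_isUnit_iff_isCoprime, Nat.cast_pow]
    exact ((Prime.coprime_iff_not_dvd (Nat.prime_iff_prime_int.mp hp)).mpr hm).pow_left
  exact hnil.isUnit_add_left_of_commute hm_unit (Commute.all _ _)

theorem Int.not_natCast_dvd_sub_mul_pow {p i i' b : ℕ} (hi0 : 0 < i) (hi : i < p)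
    (hi' : i' < p) (hne : b = 0 → i ≠ i') : ¬ (p : ℤ) ∣ i - i' * p ^ b := by
  intro hdvd
  rcases b with _ | b
  · rw [pow_zero, mul_one] at hdvd
    have := Int.eq_zero_of_abs_lt_dvd hdvd (by rw [abs_lt]; omega)
    exact hne rfl (by omega)
  · have hpi : (p : ℤ) ∣ i := by
      simpa using dvd_add hdvd ((dvd_pow_self _ b.succ_ne_zero).mul_left (i' : ℤ))
    exact absurd (Nat.le_of_dvd hi0 (Int.natCast_dvd_natCast.mp hpi)) (by omega)

theorem ZMod.exists_nsmul_add_nsmul_eq_zero_of_sub_dvd {n : ℕ} [NeZero n] {x y : ZMod n}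
    (h : x - y ∣ y) : ∃ r : ℕ, r ≤ n - 1 ∧ r • x + (n - 1 - r) • y = 0 := by
  obtain ⟨c, hc⟩ := h
  have hc_le : c.val ≤ n - 1 := Nat.le_sub_one_of_lt (ZMod.val_lt c)
  refine ⟨c.val, hc_le, ?_⟩
  have hcompl : ((n - 1 - c.val : ℕ) : ZMod n) = -1 - c := by
    rw [Nat.cast_sub hc_le, Nat.cast_sub NeZero.one_le, ZMod.natCast_self, ZMod.natCast_zmod_val]
    ring
  rw [nsmul_eq_mul, nsmul_eq_mul, ZMod.natCast_zmod_val, hcompl]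
  linear_combination -hc

theorem sub_dvd_of_sub_dvd_swap {R : Type*} [CommRing R] {x y : R} (h : y - x ∣ x) : x - y ∣ y := by
  rw [← neg_sub, neg_dvd] at h
  simpa using dvd_sub h dvd_rfl

theorem ZMod.sub_dvd_of_le {p e i j i' j' : ℕ} (hp : p.Prime) (hi0 : 0 < i) (hi : i < p)
    (hi' : i' < p) (hj : 1 ≤ j) (hjj : j ≤ j') (hne : j = j' → i ≠ i') {x y : ZMod (p ^ e)}
    (hx : ∃ k : ZMod (p ^ e),
      x = ((i * p ^ (j - 1) : ℕ) : ZMod (p ^ e)) + ((p ^ j : ℕ) : ZMod (p ^ e)) * k)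
    (hy : ∃ k : ZMod (p ^ e),
      y = ((i' * p ^ (j' - 1) : ℕ) : ZMod (p ^ e)) + ((p ^ j' : ℕ) : ZMod (p ^ e)) * k) :
    x - y ∣ y := by
  obtain ⟨k, rfl⟩ := hx
  obtain ⟨k', rfl⟩ := hy
  obtain ⟨a, rfl⟩ : ∃ a, j = a + 1 := ⟨j - 1, by omega⟩
  obtain ⟨b, rfl⟩ : ∃ b, j' = a + 1 + b := ⟨j' - (a + 1), by omega⟩
  set T : ZMod (p ^ e) := ((i - i' * p ^ b : ℤ) : ZMod (p ^ e)) + p * (k - p ^ b * k') with hT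
  have hunit : IsUnit T := isUnit_intCast_add_prime_mul hp
    (Int.not_natCast_dvd_sub_mul_pow hi0 hi hi' fun hb => hne (by omega)) _
  rw [show a + 1 + b - 1 = a + b by omega, Nat.add_sub_cancel]
  calc _ = (p : ZMod (p ^ e)) ^ a * T := by rw [hT]; push_cast; ring
    _ ∣ (p : ZMod (p ^ e)) ^ a * (p ^ b * (i' + p * k')) := mul_dvd_mul_left _ hunit.dvd
    _ = _ := by push_cast; ring

theorem stmt9_general (p e i j i' j' : ℕ) (hp : p.Prime)
    (hi1 : 1 ≤ i) (hi2 : i ≤ p - 1) (hi'1 : 1 ≤ i') (hi'2 : i' ≤ p - 1)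
    (hj1 : 1 ≤ j) (hj'1 : 1 ≤ j')
    (hne : (i, j) ≠ (i', j'))
    (x y : ZMod (p ^ e))
    (hx : ∃ k : ZMod (p ^ e),
      x = ((i * p ^ (j - 1) : ℕ) : ZMod (p ^ e)) + ((p ^ j : ℕ) : ZMod (p ^ e)) * k)
    (hy : ∃ k : ZMod (p ^ e),
      y = ((i' * p ^ (j' - 1) : ℕ) : ZMod (p ^ e)) + ((p ^ j' : ℕ) : ZMod (p ^ e)) * k) :
    ∃ r : ℕ, r ≤ p ^ e - 1 ∧ r • x + (p ^ e - 1 - r) • y = 0 := by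
  have : NeZero (p ^ e) := ⟨pow_ne_zero e hp.ne_zero⟩
  have hp1 := hp.one_lt
  apply ZMod.exists_nsmul_add_nsmul_eq_zero_of_sub_dvd
  rcases le_total j j' with hjj | hjj
  · exact ZMod.sub_dvd_of_le hp hi1 (by omega) (by omega) hj1 hjj
      (fun hj hi => hne (by rw [hi, hj])) hx hy
  · exact sub_dvd_of_sub_dvd_swap <| ZMod.sub_dvd_of_le hp hi'1 (by omega) (by omega) hj'1 hjj
      (fun hj hi => hne (by rw [hi, hj])) hy hx

theorem stmt9 (p e i j i' j' : ℕ) (hp : p.Prime) (he : 1 ≤ e)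
    (hi1 : 1 ≤ i) (hi2 : i ≤ p - 1) (hi'1 : 1 ≤ i') (hi'2 : i' ≤ p - 1)
    (hj1 : 1 ≤ j) (hj2 : j ≤ e) (hj'1 : 1 ≤ j') (hj'2 : j' ≤ e)
    (hne : (i, j) ≠ (i', j'))
    (x y : ZMod (p ^ e))
    (hx : ∃ k : ZMod (p ^ e),
      x = ((i * p ^ (j - 1) : ℕ) : ZMod (p ^ e)) + ((p ^ j : ℕ) : ZMod (p ^ e)) * k)
    (hy : ∃ k : ZMod (p ^ e),
      y = ((i' * p ^ (j' - 1) : ℕ) : ZMod (p ^ e)) + ((p ^ j' : ℕ) : ZMod (p ^ e)) * k) :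
    ∃ r : ℕ, r ≤ p ^ e - 1 ∧ r • x + (p ^ e - 1 - r) • y = 0 :=
  stmt9_general p e i j i' j' hp hi1 hi2 hi'1 hi'2 hj1 hj'1 hne x y hx hy
end

section
/- Let p be an odd prime and 1 ≤ s ≤ p. If x and y are distinct even elements of Z/2pZ, then {x, y} is not (2p − s)-zero-sumfree: there exists 0 ≤ r ≤ 2p − s with r·x + (2p − s − r)·y ≡ 0 mod 2p. -/
/-!
Write `x = 2M` and `y = 2N`. For `r ≤ ℓ := 2p - s`, `r • x + (ℓ - r) • y = 2 (ℓ • N + r • (M - N))`,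
and `2z = 0` in `ZMod (2p)` exactly when `z ≡ 0 (mod p)`. Since `x ≠ y`, `M - N` is a unit mod `p`,
so `ℓ • N + r • (M - N) ≡ 0 (mod p)` has a solution `r < p`, and `p - 1 ≤ ℓ` because `s ≤ p`.
-/

theorem ZMod.natCast_mul_eq_zero_iff_castHom {k : ℕ} (n : ℕ) (hk : k ≠ 0) (z : ZMod (k * n)) :
    (k : ZMod (k * n)) * z = 0 ↔ ZMod.castHom (dvd_mul_left n k) (ZMod n) z = 0 := by
  obtain ⟨a, rfl⟩ := ZMod.intCast_surjective z
  rw [map_intCast, ← Int.cast_natCast, ← Int.cast_mul, ZMod.intCast_zmod_eq_zero_iff_dvd,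
    ZMod.intCast_zmod_eq_zero_iff_dvd, Nat.cast_mul]
  exact mul_dvd_mul_iff_left (by exact_mod_cast hk)

theorem ZMod.exists_lt_add_nsmul_eq_zero {p : ℕ} [Fact p.Prime] (c : ZMod p) {d : ZMod p}
    (hd : d ≠ 0) : ∃ r < p, c + r • d = 0 := by
  refine ⟨(-c / d).val, ZMod.val_lt _, ?_⟩
  rw [nsmul_eq_mul, ZMod.natCast_zmod_val, div_mul_cancel₀ _ hd, add_neg_cancel]

theorem nsmul_add_sub_nsmul_eq {G : Type*} [AddCommGroup G] {r ℓ : ℕ} (h : r ≤ ℓ) (x y : G) :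
    r • x + (ℓ - r) • y = ℓ • y + r • (x - y) := by
  rw [sub_nsmul _ h, nsmul_sub]
  abel

theorem stmt11_general (p s : ℕ) (hp : p.Prime) (hs2 : s ≤ p)
    (x y : ZMod (2 * p)) (hxy : x ≠ y)
    (hx : ∃ M, x = 2 * M) (hy : ∃ M, y = 2 * M) :
    ∃ r : ℕ, r ≤ 2 * p - s ∧ r • x + (2 * p - s - r) • y = 0 := by
  have : Fact p.Prime := ⟨hp⟩
  obtain ⟨M, rfl⟩ := hx
  obtain ⟨N, rfl⟩ := hy
  have two_mul_eq_zero_iff := ZMod.natCast_mul_eq_zero_iff_castHom (k := 2) p two_ne_zero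
  rw [Nat.cast_ofNat] at two_mul_eq_zero_iff
  set φ := ZMod.castHom (dvd_mul_left p 2) (ZMod p)
  have hd : φ (M - N) ≠ 0 := by
    rwa [Ne, ← two_mul_eq_zero_iff, mul_sub, sub_eq_zero]
  obtain ⟨r, hrp, hr⟩ := ZMod.exists_lt_add_nsmul_eq_zero ((2 * p - s) • φ N) hd
  refine ⟨r, by omega, ?_⟩
  rw [nsmul_add_sub_nsmul_eq (by omega), ← mul_sub, ← mul_smul_comm, ← mul_smul_comm, ← mul_add,
    two_mul_eq_zero_iff, map_add, map_nsmul, map_nsmul, hr]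

theorem stmt11 (p s : ℕ) (hp : p.Prime) (hpodd : p ≠ 2) (hs1 : 1 ≤ s) (hs2 : s ≤ p)
    (x y : ZMod (2 * p)) (hxy : x ≠ y)
    (hx : ∃ M, x = 2 * M) (hy : ∃ M, y = 2 * M) :
    ∃ r : ℕ, r ≤ 2 * p - s ∧ r • x + (2 * p - s - r) • y = 0 :=
  stmt11_general p s hp hs2 x y hxy hx hy
end

section
/- Let p be an odd prime and let s be even with 2 ≤ s ≤ p. If x and y are distinct odd elements of Z/2pZ, then {x, y} is not (2p − s)-zero-sumfree: there exists 0 ≤ r ≤ 2p − s with r·x + (2p − s − r)·y ≡ 0 mod 2p. -/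
/-!
Write `x - y = 2u` (both are odd) and `2p - s = 2m`. Then
`r x + (2m - r) y = 2 (r u + m y)`, which vanishes in `ZMod (2p)` as soon as `r u + m y ≡ 0 (mod p)`.
Since `x ≠ y`, `u` is a unit mod `p`, so `r = -m y / u` in `ZMod p` works, and its representative
`r < p ≤ 2p - s` is an admissible count.
-/

namespace ZMod

theorem exists_eq_two_mul_or_eq_two_mul_add_one {n : ℕ} (x : ZMod n) :
    (∃ M, x = 2 * M) ∨ ∃ M, x = 2 * M + 1 := by
  rw [← intCast_zmod_cast x]
  rcases Int.even_or_odd' (x.cast : ℤ) with ⟨k, hk | hk⟩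
  · exact .inl ⟨k, by rw [hk]; push_cast; ring⟩
  · exact .inr ⟨k, by rw [hk]; push_cast; ring⟩

theorem exists_sub_eq_two_mul_of_not_exists_eq_two_mul {n : ℕ} {x y : ZMod n}
    (hx : ¬ ∃ M, x = 2 * M) (hy : ¬ ∃ M, y = 2 * M) : ∃ u, x - y = 2 * u := by
  obtain ⟨a, rfl⟩ := (exists_eq_two_mul_or_eq_two_mul_add_one x).resolve_left hx
  obtain ⟨b, rfl⟩ := (exists_eq_two_mul_or_eq_two_mul_add_one y).resolve_left hy
  exact ⟨a - b, by ring⟩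

theorem mul_eq_zero_of_castHom_eq_zero {m n : ℕ} {a : ZMod (m * n)}
    (ha : castHom (dvd_mul_left n m) (ZMod n) a = 0) : (m : ZMod (m * n)) * a = 0 := by
  rw [← intCast_zmod_cast a] at ha ⊢
  rw [map_intCast, intCast_zmod_eq_zero_iff_dvd] at ha
  rw [← Int.cast_natCast, ← Int.cast_mul, intCast_zmod_eq_zero_iff_dvd]
  push_cast
  exact mul_dvd_mul_left _ ha

theorem exists_lt_natCast_mul_add_eq_zero {p : ℕ} [Fact p.Prime] {x y u : ZMod (2 * p)}
    (hxy : x - y = 2 * u) (hu : castHom (dvd_mul_left p 2) (ZMod p) u ≠ 0) (m : ℕ) :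
    ∃ r < p, (r : ZMod (2 * p)) * x + (2 * m - r) * y = 0 := by
  set π := castHom (dvd_mul_left p 2) (ZMod p)
  set t : ZMod p := -(m * π y) / π u
  refine ⟨t.val, t.val_lt, ?_⟩
  have hπ : π (t.val * u + m * y) = 0 := by
    rw [map_add, map_mul, map_mul, map_natCast, map_natCast, natCast_zmod_val,
      div_mul_cancel₀ _ hu, neg_add_cancel]
  calc (t.val : ZMod (2 * p)) * x + (2 * m - t.val) * y
      = ((2 : ℕ) : ZMod (2 * p)) * (t.val * u + m * y) := by
        linear_combination (t.val : ZMod (2 * p)) * hxy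
    _ = 0 := mul_eq_zero_of_castHom_eq_zero hπ

end ZMod

theorem stmt12_general (p s : ℕ) (hp : p.Prime)
    (hseven : Even s) (hs2 : s ≤ p)
    (x y : ZMod (2 * p)) (hxy : x ≠ y)
    (hx : ¬ ∃ M, x = 2 * M) (hy : ¬ ∃ M, y = 2 * M) :
    ∃ r : ℕ, r ≤ 2 * p - s ∧ r • x + (2 * p - s - r) • y = 0 := by
  have : Fact p.Prime := ⟨hp⟩
  obtain ⟨u, hxyu⟩ := ZMod.exists_sub_eq_two_mul_of_not_exists_eq_two_mul hx hy
  have hu : ZMod.castHom (dvd_mul_left p 2) (ZMod p) u ≠ 0 := fun h =>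
    hxy <| sub_eq_zero.mp <| by simpa [hxyu] using ZMod.mul_eq_zero_of_castHom_eq_zero h
  obtain ⟨k, rfl⟩ := hseven
  obtain ⟨r, hrp, hr⟩ := ZMod.exists_lt_natCast_mul_add_eq_zero hxyu hu (p - k)
  have hℓ : 2 * p - (k + k) = 2 * (p - k) := by omega
  have hr_le : r ≤ 2 * (p - k) := by omega
  refine ⟨r, hℓ ▸ hr_le, ?_⟩
  rw [hℓ, nsmul_eq_mul, nsmul_eq_mul, Nat.cast_sub hr_le]
  push_cast
  exact hr

theorem stmt12 (p s : ℕ) (hp : p.Prime) (hpodd : p ≠ 2)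
    (hseven : Even s) (hs1 : 2 ≤ s) (hs2 : s ≤ p)
    (x y : ZMod (2 * p)) (hxy : x ≠ y)
    (hx : ¬ ∃ M, x = 2 * M) (hy : ¬ ∃ M, y = 2 * M) :
    ∃ r : ℕ, r ≤ 2 * p - s ∧ r • x + (2 * p - s - r) • y = 0 :=
  stmt12_general p s hp hseven hs2 x y hxy hx hy
end

section
/- Let p be an odd prime. Two elements i (odd) and j (nonzero even) of Z/2pZ satisfy: {i, j} is (2p − 1)-zero-sumfree if and only if i ≡ j mod p. -/
theorem isZeroSumfree_pair_iff {n ℓ : ℕ} {i j : ZMod n} (hij : i ≠ j) :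
    IsZeroSumfree n ℓ {i, j} ↔ ¬ ∃ a b : ℕ, a + b = ℓ ∧ a • i + b • j = 0 := by
  simp only [IsZeroSumfree, Finset.sum_pair hij, not_exists, not_and]
  refine ⟨fun h a b hab => ?_, fun h c => h (c i) (c j)⟩
  simpa [hij.symm] using h (fun x => if x = i then a else b) (by simpa [hij.symm] using hab)

theorem ZMod.natCast_eq_neg_one_sub {n a b : ℕ} [NeZero n] (hab : a + b = n - 1) :
    (b : ZMod n) = -1 - a := by
  have hsum : ((a + b : ℕ) : ZMod n) = -1 := by
    rw [hab, Nat.cast_pred (NeZero.pos n), ZMod.natCast_self, zero_sub]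
  push_cast at hsum
  linear_combination hsum

theorem isZeroSumfree_sub_one_pair_iff {n : ℕ} [NeZero n] {i j : ZMod n} (hij : i ≠ j) :
    IsZeroSumfree n (n - 1) {i, j} ↔ ¬ i - j ∣ j := by
  rw [isZeroSumfree_pair_iff hij, not_iff_not]
  constructor
  · rintro ⟨a, b, hab, hzero⟩
    rw [nsmul_eq_mul, nsmul_eq_mul, ZMod.natCast_eq_neg_one_sub hab] at hzero
    exact ⟨a, by linear_combination -hzero⟩
  · rintro ⟨y, hy⟩
    have hab : y.val + (n - 1 - y.val) = n - 1 := by have := y.val_lt; omega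
    refine ⟨y.val, n - 1 - y.val, hab, ?_⟩
    rw [nsmul_eq_mul, nsmul_eq_mul, ZMod.natCast_eq_neg_one_sub hab, ZMod.natCast_zmod_val]
    linear_combination -hy

namespace ZMod

variable {m n : ℕ}

theorem chineseRemainder_apply (h : m.Coprime n) (x : ZMod (m * n)) :
    chineseRemainder h x = (castHom (dvd_mul_right m n) (ZMod m) x,
      castHom (dvd_mul_left n m) (ZMod n) x) :=
  Prod.ext (Prod.fst_zmod_cast x) (Prod.snd_zmod_cast x)

theorem eq_zero_iff_castHom_eq_zero (h : m.Coprime n) {x : ZMod (m * n)} :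
    x = 0 ↔ castHom (dvd_mul_right m n) (ZMod m) x = 0 ∧
      castHom (dvd_mul_left n m) (ZMod n) x = 0 := by
  rw [← (chineseRemainder h).map_eq_zero_iff, chineseRemainder_apply, Prod.mk_eq_zero]

theorem dvd_iff_castHom_dvd (h : m.Coprime n) {x y : ZMod (m * n)} :
    x ∣ y ↔ castHom (dvd_mul_right m n) (ZMod m) x ∣ castHom (dvd_mul_right m n) (ZMod m) y ∧
      castHom (dvd_mul_left n m) (ZMod n) x ∣ castHom (dvd_mul_left n m) (ZMod n) y := by
  rw [← map_dvd_iff (chineseRemainder h), chineseRemainder_apply, chineseRemainder_apply,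
    Prod.mk_dvd_mk]

theorem castHom_eq_val_mod [NeZero n] (h : m ∣ n) (x : ZMod n) :
    castHom h (ZMod m) x = (x.val % m : ℕ) := by
  rw [castHom_apply, cast_eq_val, natCast_mod]

end ZMod

theorem sub_dvd_right_iff_ne {K : Type*} [DivisionRing K] {a b : K} (hb : b ≠ 0) :
    a - b ∣ b ↔ a ≠ b := by
  refine ⟨fun h hab => hb ?_, fun hab => (sub_ne_zero.2 hab).isUnit.dvd⟩
  rwa [hab, sub_self, zero_dvd_iff] at h

theorem stmt14 (p : ℕ) (hp : p.Prime) (hpodd : p ≠ 2) (i j : ZMod (2 * p))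
    (hi : i.val % 2 = 1) (hj : j.val % 2 = 0) (hj0 : j ≠ 0) :
    IsZeroSumfree (2 * p) (2 * p - 1) {i, j}
      ↔ ZMod.castHom (dvd_mul_left p 2) (ZMod p) i
          = ZMod.castHom (dvd_mul_left p 2) (ZMod p) j := by
  have : Fact p.Prime := ⟨hp⟩
  have : NeZero (2 * p) := ⟨mul_ne_zero two_ne_zero hp.ne_zero⟩
  have hcop : Nat.Coprime 2 p := (Nat.coprime_primes Nat.prime_two hp).2 (Ne.symm hpodd)
  have hij : i ≠ j := by rintro rfl; omega
  have hi2 := ZMod.castHom_eq_val_mod (dvd_mul_right 2 p) i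
  have hj2 := ZMod.castHom_eq_val_mod (dvd_mul_right 2 p) j
  rw [hi, Nat.cast_one] at hi2
  rw [hj, Nat.cast_zero] at hj2
  have hjp : ZMod.castHom (dvd_mul_left p 2) (ZMod p) j ≠ 0 :=
    fun h => hj0 ((ZMod.eq_zero_iff_castHom_eq_zero hcop).2 ⟨hj2, h⟩)
  rw [isZeroSumfree_sub_one_pair_iff hij, ZMod.dvd_iff_castHom_dvd hcop, map_sub, map_sub, hi2,
    hj2, sub_dvd_right_iff_ne hjp, not_and, not_not]
  exact ⟨fun h => h (one_dvd _), fun h _ => h⟩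
end
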